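/- arXiv:1603.04337 — 8 statements merged into one kernel-verified Lean document; each statement's English description precedes it below -/
import Mathlib

section
/- If the power graph of a group G has finite independence number, then the center Z(G) has finite index in G. -/
/-- The power graph of a group: distinct `x, y` are adjacent iff one is a power of the other. -/
def powerGraph (G : Type*) [Group G] : SimpleGraph G where
  Adj x y := x ≠ y ∧ ∃ n : ℕ, y = x ^ n ∨ x = y ^ n
  symm := ⟨by rintro x y ⟨h, n, hn⟩; exact ⟨h.symm, n, hn.symm⟩⟩
  loopless := ⟨by rintro x ⟨h, _⟩; exact h rfl⟩

/-- A set of vertices is independent if no two of its elements are adjacent. -/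
def IsIndepSet {V : Type*} (G' : SimpleGraph V) (s : Set V) : Prop :=
  s.Pairwise fun x y => ¬ G'.Adj x y

/-!
Every element of `G` lies in a maximal locally cyclic subgroup (Zorn). If `A₁, …, Aₙ` are distinct
maximal locally cyclic subgroups, none is contained in the union of the others (a locally cyclic
group is not a finite union of proper subgroups), so picking `aᵢ ∈ Aᵢ` outside the other `Aⱼ`
gives an independent set of the power graph: a power of `aᵢ` stays in `Aᵢ`. Hence there are only
finitely many maximal locally cyclic subgroups, and `G` is a finite union of abelian subgroups.
By B. H. Neumann's lemma those of finite index already cover `G`; their intersection has finite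
index and is central.
-/

open Set
open scoped Pointwise

namespace Subgroup

variable {G : Type*} [Group G]

/-- Equivalently (by `exists_finset_subset_zpowers`), every finitely generated subgroup of `A` is
cyclic. -/
def IsLocallyCyclic (A : Subgroup G) : Prop :=
  ∀ a ∈ A, ∀ b ∈ A, ∃ c ∈ A, a ∈ zpowers c ∧ b ∈ zpowers c

theorem isLocallyCyclic_zpowers (g : G) : (zpowers g).IsLocallyCyclic :=
  fun _ ha _ hb => ⟨g, mem_zpowers g, ha, hb⟩

namespace IsLocallyCyclic

variable {A : Subgroup G}

theorem commute (hA : A.IsLocallyCyclic) {a b : G} (ha : a ∈ A) (hb : b ∈ A) : Commute a b := by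
  obtain ⟨c, -, ⟨m, rfl⟩, ⟨n, rfl⟩⟩ := hA a ha b hb
  exact Commute.zpow_zpow_self c m n

theorem exists_finset_subset_zpowers (hA : A.IsLocallyCyclic) (s : Finset G)
    (hs : (s : Set G) ⊆ A) : ∃ c ∈ A, (s : Set G) ⊆ zpowers c := by
  classical
  induction s using Finset.induction_on with
  | empty => exact ⟨1, A.one_mem, by simp⟩
  | insert a s _ ih =>
    rw [Finset.coe_insert, insert_subset_iff] at hs
    obtain ⟨c, hcA, hsc⟩ := ih hs.2
    obtain ⟨d, hdA, had, hcd⟩ := hA a hs.1 c hcA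
    refine ⟨d, hdA, ?_⟩
    rw [Finset.coe_insert, insert_subset_iff]
    exact ⟨had, hsc.trans (zpowers_le.mpr hcd)⟩

theorem exists_mem_forall_notMem (hA : A.IsLocallyCyclic) {ι : Type*} (t : Finset ι)
    (K : ι → Subgroup G) (hK : ∀ i ∈ t, ¬ A ≤ K i) : ∃ a ∈ A, ∀ i ∈ t, a ∉ K i := by
  classical
  have hb : ∀ i ∈ t, ∃ b ∈ A, b ∉ K i := fun i hi => SetLike.not_le_iff_exists.mp (hK i hi)
  choose! b hbA hbK using hb
  obtain ⟨c, hcA, hc⟩ := hA.exists_finset_subset_zpowers (t.image b) (by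
    simpa [Set.subset_def] using hbA)
  refine ⟨c, hcA, fun i hi hci => hbK i hi ?_⟩
  exact zpowers_le.mpr hci (hc (Finset.mem_image_of_mem b hi))

end IsLocallyCyclic

theorem isLocallyCyclic_sSup_of_directedOn {S : Set (Subgroup G)} (hne : S.Nonempty)
    (hdir : DirectedOn (· ≤ ·) S) (hS : ∀ A ∈ S, A.IsLocallyCyclic) :
    (sSup S).IsLocallyCyclic := by
  intro a ha b hb
  obtain ⟨A, hA, haA⟩ := (mem_sSup_of_directedOn hne hdir).mp ha
  obtain ⟨B, hB, hbB⟩ := (mem_sSup_of_directedOn hne hdir).mp hb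
  obtain ⟨C, hC, hAC, hBC⟩ := hdir A hA B hB
  obtain ⟨c, hcC, hac, hbc⟩ := hS C hC a (hAC haA) b (hBC hbB)
  exact ⟨c, le_sSup hC hcC, hac, hbc⟩

theorem exists_maximal_isLocallyCyclic_mem (g : G) :
    ∃ A : Subgroup G, Maximal IsLocallyCyclic A ∧ g ∈ A := by
  obtain ⟨A, hgA, hA⟩ := zorn_le_nonempty₀ {A : Subgroup G | A.IsLocallyCyclic}
    (fun S hS hchain B hB => ⟨sSup S,
      isLocallyCyclic_sSup_of_directedOn ⟨B, hB⟩ hchain.directedOn hS, fun _ => le_sSup⟩)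
    (zpowers g) (isLocallyCyclic_zpowers g)
  exact ⟨A, hA, hgA (mem_zpowers g)⟩

theorem finiteIndex_center_of_commute_cover (s : Finset (Subgroup G))
    (hcomm : ∀ H ∈ s, ∀ x ∈ H, ∀ y ∈ H, Commute x y) (hcover : ∀ g : G, ∃ H ∈ s, g ∈ H) :
    (center G).FiniteIndex := by
  classical
  have hcover' : ⋃ H ∈ s, (1 : G) • (H : Set G) = univ :=
    eq_univ_of_forall fun g => by simpa using hcover g
  have hfi := leftCoset_cover_filter_FiniteIndex (H := id) hcover'
  set t := s.filter fun H => H.FiniteIndex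
  have : (⨅ H ∈ t, H).FiniteIndex := finiteIndex_iInf' id fun H hH => (Finset.mem_filter.mp hH).2
  refine finiteIndex_of_le (H := ⨅ H ∈ t, H) fun k hk => mem_center_iff.mpr fun g => ?_
  obtain ⟨H, hH, hgH⟩ := mem_iUnion₂.mp (hfi ▸ mem_univ g)
  have hkH : k ∈ H := (biInf_le id hH : (⨅ H ∈ t, H) ≤ H) hk
  exact hcomm H (Finset.mem_filter.mp hH).1 g (by simpa using hgH) k hkH

end Subgroup

section PowerGraph

open Subgroup

variable {G : Type*} [Group G]

theorem not_powerGraph_adj_of_mem_of_notMem {x y : G} {H K : Subgroup G}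
    (hxH : x ∈ H) (hyH : y ∉ H) (hyK : y ∈ K) (hxK : x ∉ K) : ¬ (powerGraph G).Adj x y := by
  rintro ⟨-, n, rfl | rfl⟩
  · exact hyH (pow_mem hxH n)
  · exact hxK (pow_mem hyK n)

theorem exists_isIndepSet_powerGraph_card_eq (t : Finset (Subgroup G))
    (ht : ∀ A ∈ t, Maximal IsLocallyCyclic A) :
    ∃ s : Finset G, IsIndepSet (powerGraph G) ↑s ∧ s.card = t.card := by
  classical
  have hincomp : ∀ A ∈ t, ∀ B ∈ t, A ≠ B → ¬ A ≤ B := fun A hA B hB hAB hle =>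
    hAB (le_antisymm hle ((ht A hA).2 (ht B hB).1 hle))
  have hsep : ∀ A ∈ t, ∃ a ∈ A, ∀ B ∈ t.erase A, a ∉ B := fun A hA =>
    (ht A hA).1.exists_mem_forall_notMem _ id fun B hB =>
      hincomp A hA B (Finset.mem_erase.mp hB).2 (Finset.mem_erase.mp hB).1.symm
  choose! f hfA hf using hsep
  have hf' : ∀ A ∈ t, ∀ B ∈ t, A ≠ B → f A ∉ B := fun A hA B hB hAB =>
    hf A hA B (Finset.mem_erase.mpr ⟨hAB.symm, hB⟩)
  have hinj : InjOn f t := fun A hA B hB hAB => by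
    by_contra hne
    exact hf' A hA B hB hne (hAB ▸ hfA B hB)
  refine ⟨t.image f, ?_, Finset.card_image_of_injOn hinj⟩
  rintro _ hx _ hy hxy
  obtain ⟨A, hA, rfl⟩ := Finset.mem_image.mp hx
  obtain ⟨B, hB, rfl⟩ := Finset.mem_image.mp hy
  have hAB : A ≠ B := fun h => hxy (h ▸ rfl)
  exact not_powerGraph_adj_of_mem_of_notMem (hfA A hA) (hf' B hB A hA hAB.symm) (hfA B hB)
    (hf' A hA B hB hAB)

theorem finite_setOf_maximal_isLocallyCyclic {N : ℕ}
    (hN : ∀ s : Finset G, IsIndepSet (powerGraph G) ↑s → s.card ≤ N) :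
    {A : Subgroup G | Maximal IsLocallyCyclic A}.Finite := by
  by_contra hinf
  obtain ⟨t, ht, hcard⟩ := Set.Infinite.exists_subset_card_eq hinf (N + 1)
  obtain ⟨s, hs, hscard⟩ := exists_isIndepSet_powerGraph_card_eq t ht
  have := hN s hs
  omega

end PowerGraph

theorem center_finiteIndex_of_finite_independence_number (G : Type*) [Group G]
    (h : ∃ N : ℕ, ∀ s : Finset G, IsIndepSet (powerGraph G) ↑s → s.card ≤ N) :
    (Subgroup.center G).FiniteIndex := by
  obtain ⟨N, hN⟩ := h
  have hfin := finite_setOf_maximal_isLocallyCyclic hN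
  refine Subgroup.finiteIndex_center_of_commute_cover hfin.toFinset
    (fun A hA x hx y hy => (hfin.mem_toFinset.mp hA).1.commute hx hy) fun g => ?_
  obtain ⟨A, hA, hgA⟩ := Subgroup.exists_maximal_isLocallyCyclic_mem g
  exact ⟨A, hfin.mem_toFinset.mpr hA, hgA⟩
end

section
/- If p is a prime and G is a p-group whose power graph has finite independence number, then either G is finite or G is isomorphic to the Prüfer group C_{p^∞}. -/
/-- The Prüfer `p`-group: the `p`-primary component of `ℚ/ℤ`. -/
def pruferGroup (p : ℕ) : AddSubgroup (ℚ ⧸ AddSubgroup.zmultiples (1 : ℚ)) where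
  carrier := {x | ∃ n : ℕ, p ^ n • x = 0}
  zero_mem' := ⟨0, smul_zero _⟩
  add_mem' := by
    rintro a b ⟨m, hm⟩ ⟨n, hn⟩
    refine ⟨m + n, ?_⟩
    have ha : p ^ (m + n) • a = 0 := by rw [pow_add, mul_comm, mul_smul, hm, smul_zero]
    have hb : p ^ (m + n) • b = 0 := by rw [pow_add, mul_smul, hn, smul_zero]
    rw [smul_add, ha, hb, add_zero]
  neg_mem' := by
    rintro a ⟨m, hm⟩
    exact ⟨m, by rw [smul_neg, hm, neg_zero]⟩

/-!
Adjacent elements of equal order generate the same cyclic subgroup, so each element is adjacent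
to only finitely many elements of its own order; a bounded independence number therefore makes
every set `{g | orderOf g = n}` finite, and likewise the set of elements lying only in cyclic
subgroups of bounded order. Since the subgroups of a cyclic `p`-group form a chain, Kőnig's lemma
puts every other element into the union of a tower `x 0, x 1, …` with `orderOf (x n) = p ^ n`
and `x (n + 1) ^ p = x n`, a copy of `C_{p^∞}`. Two such unions coincide or meet in a finite set,
so elements of large order taken from distinct unions are independent: there are finitely many
unions, and together with a finite set they cover `G`. If `G` is infinite, B. H. Neumann's lemma
says the unions of finite index already cover `G`; two of them would meet in an infinite set, so
there is just one, and it is `G`.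
-/

section

open Subgroup Pointwise

theorem finite_of_forall_finite_adj {V : Type*} {Γ : SimpleGraph V} {N : ℕ}
    (hN : ∀ s : Finset V, IsIndepSet Γ ↑s → s.card ≤ N) {S : Set V}
    (hS : ∀ a ∈ S, {b ∈ S | Γ.Adj a b}.Finite) : S.Finite := by
  classical
  by_contra hinf
  have hgrow (n : ℕ) : ∃ s : Finset V, ↑s ⊆ S ∧ IsIndepSet Γ ↑s ∧ s.card = n := by
    induction n with
    | zero => exact ⟨∅, by simp, by simp [IsIndepSet], rfl⟩
    | succ n ih =>
      obtain ⟨s, hsS, hs, rfl⟩ := ih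
      have hfin : (↑s ∪ ⋃ a ∈ s, {b ∈ S | Γ.Adj a b}).Finite :=
        s.finite_toSet.union (s.finite_toSet.biUnion fun a ha => hS a (hsS ha))
      obtain ⟨b, hbS, hb⟩ := (Set.Infinite.sdiff hinf hfin).nonempty
      simp only [Set.mem_union, Finset.mem_coe, Set.mem_iUnion, Set.mem_ofPred_eq, not_or,
        not_exists, not_and] at hb
      refine ⟨insert b s, by simpa using Set.insert_subset hbS hsS, ?_,
        Finset.card_insert_of_notMem hb.1⟩
      rw [IsIndepSet, Finset.coe_insert, Set.pairwise_insert]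
      exact ⟨hs, fun a ha _ => ⟨fun hadj => hb.2 a ha hbS hadj.symm, hb.2 a ha hbS⟩⟩
  obtain ⟨s, -, hs, hcard⟩ := hgrow (N + 1)
  have := hN s hs
  omega

variable {G : Type*} [Group G] {p : ℕ}

theorem mem_zpowers_of_orderOf_dvd {z a b : G} (hz : IsOfFinOrder z) (ha : a ∈ zpowers z)
    (hb : b ∈ zpowers z) (hab : orderOf a ∣ orderOf b) : a ∈ zpowers b := by
  obtain ⟨s, rfl⟩ : ∃ s : ℕ, z ^ s = a := hz.mem_powers_iff_mem_zpowers.mpr ha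
  obtain ⟨t, rfl⟩ : ∃ t : ℕ, z ^ t = b := hz.mem_powers_iff_mem_zpowers.mpr hb
  set n := orderOf z
  set d := Nat.gcd n t
  have hd : d ∣ n := Nat.gcd_dvd_left n t
  have hzd : z ^ d ∈ zpowers (z ^ t) := by
    refine ⟨Nat.gcdB n t, ?_⟩
    have hbezout : (d : ℤ) = t * Nat.gcdB n t + n * Nat.gcdA n t := by
      rw [Nat.gcd_eq_gcd_ab]; ring
    rw [← zpow_natCast z d, hbezout, zpow_add, zpow_mul z n, zpow_natCast z n,
      pow_orderOf_eq_one, one_zpow, mul_one, zpow_mul, zpow_natCast]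
  have hds : d ∣ s := by
    have hpos : 0 < n / d := Nat.div_pos (Nat.le_of_dvd hz.orderOf_pos hd)
      (Nat.gcd_pos_of_pos_left _ hz.orderOf_pos)
    have hn : n ∣ s * (n / d) := by
      rw [orderOf_dvd_iff_pow_eq_one, pow_mul, ← orderOf_dvd_iff_pow_eq_one]
      exact hab.trans (IsOfFinOrder.orderOf_pow z t hz).dvd
    exact Nat.dvd_of_mul_dvd_mul_right hpos (by rwa [Nat.mul_div_cancel' hd])
  obtain ⟨e, rfl⟩ := hds
  rw [pow_mul]
  exact pow_mem hzd e

theorem mem_zpowers_or_mem_zpowers_of_orderOf_eq_prime_pow [hp : Fact p.Prime] {z a b : G}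
    {k : ℕ} (hz : orderOf z = p ^ k) (ha : a ∈ zpowers z) (hb : b ∈ zpowers z) :
    a ∈ zpowers b ∨ b ∈ zpowers a := by
  have hfin : IsOfFinOrder z := orderOf_pos_iff.mp (hz ▸ pow_pos hp.out.pos k)
  obtain ⟨i, -, hi⟩ := (Nat.dvd_prime_pow hp.out).mp (hz ▸ orderOf_dvd_of_mem_zpowers ha)
  obtain ⟨j, -, hj⟩ := (Nat.dvd_prime_pow hp.out).mp (hz ▸ orderOf_dvd_of_mem_zpowers hb)
  rcases le_total i j with hij | hji
  · exact Or.inl (mem_zpowers_of_orderOf_dvd hfin ha hb (hi ▸ hj ▸ pow_dvd_pow p hij))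
  · exact Or.inr (mem_zpowers_of_orderOf_dvd hfin hb ha (hi ▸ hj ▸ pow_dvd_pow p hji))

theorem orderOf_pow_prime_pow_sub [hp : Fact p.Prime] {z : G} {i j : ℕ}
    (hz : orderOf z = p ^ j) (hij : i ≤ j) : orderOf (z ^ p ^ (j - i)) = p ^ i := by
  rw [orderOf_pow_of_dvd (pow_ne_zero _ hp.out.ne_zero) (hz ▸ pow_dvd_pow p (Nat.sub_le j i)),
    hz, Nat.pow_div (Nat.sub_le j i) hp.out.pos, Nat.sub_sub_self hij]

theorem mem_zpowers_or_mem_zpowers_of_powerGraph_adj {a b : G} (h : (powerGraph G).Adj a b) :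
    b ∈ zpowers a ∨ a ∈ zpowers b := by
  obtain ⟨-, n, rfl | rfl⟩ := h
  · exact Or.inl (npow_mem_zpowers a n)
  · exact Or.inr (npow_mem_zpowers b n)

theorem setOf_orderOf_eq_finite {N : ℕ}
    (hN : ∀ s : Finset G, IsIndepSet (powerGraph G) ↑s → s.card ≤ N) {n : ℕ} (hn : n ≠ 0) :
    {g : G | orderOf g = n}.Finite := by
  refine finite_of_forall_finite_adj hN fun a ha => ?_
  have ha' : IsOfFinOrder a := orderOf_pos_iff.mp (Nat.pos_of_ne_zero (ha ▸ hn))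
  refine (finite_zpowers.mpr ha').subset fun b ⟨hb, hab⟩ => ?_
  refine (mem_zpowers_or_mem_zpowers_of_powerGraph_adj hab).elim id fun h => ?_
  have hb' : IsOfFinOrder b := orderOf_pos_iff.mp (Nat.pos_of_ne_zero (hb ▸ hn))
  exact mem_zpowers_of_orderOf_dvd hb' (mem_zpowers b) h (by rw [ha, hb])

theorem setOf_orderOf_le_finite (hG : IsMulTorsion G) {N : ℕ}
    (hN : ∀ s : Finset G, IsIndepSet (powerGraph G) ↑s → s.card ≤ N) (m : ℕ) :
    {g : G | orderOf g ≤ m}.Finite :=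
  ((Finset.Icc 1 m).finite_toSet.biUnion fun _ hn =>
      setOf_orderOf_eq_finite hN (Nat.one_le_iff_ne_zero.mp (Finset.mem_Icc.mp hn).1)).subset
    fun g hg => Set.mem_biUnion (x := orderOf g) (Finset.mem_Icc.mpr ⟨(hG g).orderOf_pos, hg⟩) rfl

theorem card_le_of_pairwise_finite_inf {N : ℕ}
    (hN : ∀ s : Finset G, IsIndepSet (powerGraph G) ↑s → s.card ≤ N) {𝓗 : Finset (Subgroup G)}
    (hinf : ∀ H ∈ 𝓗, (H : Set G).Infinite)
    (hpair : (𝓗 : Set (Subgroup G)).Pairwise fun H K => ((H ⊓ K : Subgroup G) : Set G).Finite) :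
    𝓗.card ≤ N := by
  classical
  set B : Set G := ⋃ H ∈ 𝓗, ⋃ K ∈ 𝓗.erase H, ((H ⊓ K : Subgroup G) : Set G)
  have hB : B.Finite := 𝓗.finite_toSet.biUnion fun H hH => (𝓗.erase H).finite_toSet.biUnion
    fun K hK => hpair hH (Finset.mem_of_mem_erase hK) (Finset.ne_of_mem_erase hK).symm
  choose! g hgH hgB using fun H (hH : H ∈ 𝓗) => ((hinf H hH).sdiff hB).nonempty
  have hgK : ∀ H ∈ 𝓗, ∀ K ∈ 𝓗, H ≠ K → g H ∉ K := fun H hH K hK hne hmem =>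
    hgB H hH (Set.mem_biUnion hH (Set.mem_biUnion (Finset.mem_erase.mpr ⟨hne.symm, hK⟩)
      ⟨hgH H hH, hmem⟩))
  have hinj : Set.InjOn g 𝓗 := fun H hH K hK hHK => by
    by_contra hne
    exact hgK H hH K hK hne (hHK ▸ hgH K hK)
  have hindep : IsIndepSet (powerGraph G) ↑(𝓗.image g) := by
    rintro _ ha _ hb hne hadj
    obtain ⟨H, hH, rfl⟩ := Finset.mem_image.mp ha
    obtain ⟨K, hK, rfl⟩ := Finset.mem_image.mp hb
    have hHK : H ≠ K := fun h => hne (h ▸ rfl)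
    rcases mem_zpowers_or_mem_zpowers_of_powerGraph_adj hadj with h | h
    · exact hgK K hK H hH hHK.symm (zpowers_le.mpr (hgH H hH) h)
    · exact hgK H hH K hK hHK (zpowers_le.mpr (hgH K hK) h)
  simpa [Finset.card_image_of_injOn hinj] using hN _ hindep

def HasUnboundedRoots (a : G) : Prop :=
  ∀ m : ℕ, ∃ y : G, a ∈ zpowers y ∧ m ≤ orderOf y

theorem setOf_not_hasUnboundedRoots_finite (hG : IsMulTorsion G) {N : ℕ}
    (hN : ∀ s : Finset G, IsIndepSet (powerGraph G) ↑s → s.card ≤ N) :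
    {a : G | ¬HasUnboundedRoots a}.Finite := by
  refine finite_of_forall_finite_adj hN fun a ha => ?_
  obtain ⟨m, hm⟩ : ∃ m, ∀ y : G, a ∈ zpowers y → orderOf y < m := by
    simpa [HasUnboundedRoots] using ha
  refine ((finite_zpowers.mpr (hG a)).union (setOf_orderOf_le_finite hG hN m)).subset
    fun b ⟨_, hab⟩ => ?_
  exact (mem_zpowers_or_mem_zpowers_of_powerGraph_adj hab).imp id fun h => (hm b h).le

theorem exists_eq_top_of_covers [Infinite G] {F : Set G} (hF : F.Finite)
    {𝒯 : Set (Subgroup G)} (h𝒯 : 𝒯.Finite)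
    (hpair : 𝒯.Pairwise fun H K => ((H ⊓ K : Subgroup G) : Set G).Finite)
    (hcover : ∀ g ∉ F, ∃ H ∈ 𝒯, g ∈ H) : ∃ H ∈ 𝒯, H = ⊤ := by
  classical
  let s : Finset (G ⊕ Subgroup G) := hF.toFinset.disjSum h𝒯.toFinset
  let g : G ⊕ Subgroup G → G := Sum.elim id 1
  let K : G ⊕ Subgroup G → Subgroup G := Sum.elim (fun _ => ⊥) id
  have hcovers : ⋃ i ∈ s, g i • (K i : Set G) = Set.univ := by
    refine Set.eq_univ_of_forall fun x => ?_
    by_cases hx : x ∈ F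
    · exact Set.mem_biUnion (x := Sum.inl x) (by simpa [s] using hx) (by simp [g, K])
    · obtain ⟨H, hH, hxH⟩ := hcover x hx
      exact Set.mem_biUnion (x := Sum.inr H) (by simpa [s] using hH) (by simpa [g, K] using hxH)
  have hinf (H : Subgroup G) (hH : H.FiniteIndex) : (H : Set G).Infinite := fun hfin =>
    not_finite_iff_infinite.mpr ‹_›
      ((finite_iff_finite_and_finiteIndex H).mpr ⟨hfin.to_subtype, hH⟩)
  have hcovers' (x : G) : ∃ H ∈ 𝒯, H.FiniteIndex ∧ x ∈ H := by
    obtain ⟨i, hi, hx⟩ :=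
      Set.mem_iUnion₂.mp (leftCoset_cover_filter_FiniteIndex hcovers ▸ Set.mem_univ x)
    obtain ⟨his, hK⟩ := Finset.mem_filter.mp hi
    rcases i with f | H
    · exact absurd ((Set.finite_singleton 1).subset (by simp [K])) (hinf _ hK)
    · exact ⟨H, by simpa [s] using his, hK, by simpa [g, K] using hx⟩
  have huniq {H H' : Subgroup G} (hH : H ∈ 𝒯) (hH' : H' ∈ 𝒯) [H.FiniteIndex]
      [H'.FiniteIndex] : H = H' := by
    by_contra hne
    exact hinf (H ⊓ H') inferInstance (hpair hH hH' hne)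
  obtain ⟨H, hH, hHfi, -⟩ := hcovers' 1
  refine ⟨H, hH, (eq_top_iff' H).mpr fun x => ?_⟩
  obtain ⟨H', hH', hH'fi, hx⟩ := hcovers' x
  rwa [huniq hH hH']

structure IsTower (p : ℕ) (x : ℕ → G) : Prop where
  orderOf_eq : ∀ n, orderOf (x n) = p ^ n
  pow_succ : ∀ n, x (n + 1) ^ p = x n

def towerSubgroup (x : ℕ → G) : Subgroup G :=
  ⨆ n, zpowers (x n)

theorem pow_pow_of_forall_pow_succ {x : ℕ → G} (h : ∀ n, x (n + 1) ^ p = x n) (n d : ℕ) :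
    x (n + d) ^ p ^ d = x n := by
  induction d with
  | zero => simp
  | succ d ih => rw [← add_assoc, pow_succ', pow_mul, h, ih]

theorem IsTower.of_pow_succ [Fact p.Prime] {x : ℕ → G} (h0 : x 0 = 1) (h1 : x 1 ≠ 1)
    (h : ∀ n, x (n + 1) ^ p = x n) : IsTower p x where
  orderOf_eq
    | 0 => by simp [h0]
    | n + 1 => orderOf_eq_prime_pow
        (by rwa [add_comm, pow_pow_of_forall_pow_succ h 1 n])
        (by simpa [h0] using pow_pow_of_forall_pow_succ h 0 (n + 1))
  pow_succ := h

namespace IsTower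

variable {x : ℕ → G}

theorem zpowers_mono (hx : IsTower p x) : Monotone fun n => zpowers (x n) :=
  monotone_nat_of_le_succ fun n => zpowers_le.mpr (hx.pow_succ n ▸ npow_mem_zpowers _ p)

theorem mem_towerSubgroup (hx : IsTower p x) {g : G} :
    g ∈ towerSubgroup x ↔ ∃ n, g ∈ zpowers (x n) :=
  mem_iSup_of_directed hx.zpowers_mono.directed_le

theorem exists_zpow_eq (hx : IsTower p x) (htop : towerSubgroup x = ⊤) (g : G) :
    ∃ n : ℕ, ∃ k : ℤ, x n ^ k = g := by
  obtain ⟨n, hn⟩ := hx.mem_towerSubgroup.mp (htop ▸ mem_top g)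
  exact ⟨n, mem_zpowers_iff.mp hn⟩

theorem towerSubgroup_infinite [hp : Fact p.Prime] (hx : IsTower p x) :
    (towerSubgroup x : Set G).Infinite := by
  refine Set.infinite_of_injective_forall_mem (fun n m hnm => ?_)
    fun n => hx.mem_towerSubgroup.mpr ⟨n, mem_zpowers (x n)⟩
  exact Nat.pow_right_injective hp.out.two_le (by simp only [← hx.orderOf_eq, hnm])

theorem eq_towerSubgroup_of_le [hp : Fact p.Prime] (hx : IsTower p x) {K : Subgroup G}
    (hK : K ≤ towerSubgroup x) (hinf : (K : Set G).Infinite) : K = towerSubgroup x := by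
  refine le_antisymm hK (iSup_le fun n => zpowers_le.mpr ?_)
  have hxn : IsOfFinOrder (x n) := orderOf_pos_iff.mp (hx.orderOf_eq n ▸ pow_pos hp.out.pos n)
  obtain ⟨g, hgK, hgn⟩ := (hinf.sdiff (finite_zpowers.mpr hxn)).nonempty
  obtain ⟨m, hgm⟩ := hx.mem_towerSubgroup.mp (hK hgK)
  rcases mem_zpowers_or_mem_zpowers_of_orderOf_eq_prime_pow (hx.orderOf_eq (max n m))
    (hx.zpowers_mono (le_max_left n m) (mem_zpowers _))
    (hx.zpowers_mono (le_max_right n m) hgm) with h | h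
  · exact zpowers_le.mpr hgK h
  · exact absurd h hgn

theorem inf_finite [Fact p.Prime] (hx : IsTower p x) {y : ℕ → G} (hy : IsTower p y)
    (hne : towerSubgroup x ≠ towerSubgroup y) :
    ((towerSubgroup x ⊓ towerSubgroup y : Subgroup G) : Set G).Finite := by
  by_contra h
  exact hne ((hx.eq_towerSubgroup_of_le inf_le_left h).symm.trans
    (hy.eq_towerSubgroup_of_le inf_le_right h))

theorem zpow_eq_zpow_add (hx : IsTower p x) (n d : ℕ) (k : ℤ) :
    x n ^ k = x (n + d) ^ ((p ^ d : ℕ) * k) := by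
  rw [zpow_mul, zpow_natCast, pow_pow_of_forall_pow_succ hx.pow_succ]

theorem zpow_eq_zpow_iff {H : Type*} [Group H] {y : ℕ → H} (hx : IsTower p x)
    (hy : IsTower p y) (n m : ℕ) (k j : ℤ) : x n ^ k = x m ^ j ↔ y n ^ k = y m ^ j := by
  wlog h : n ≤ m generalizing n m k j
  · rw [eq_comm, this m n j k (le_of_not_ge h), eq_comm]
  obtain ⟨d, rfl⟩ := Nat.exists_eq_add_of_le h
  rw [hx.zpow_eq_zpow_add n d, hy.zpow_eq_zpow_add n d, zpow_eq_zpow_iff_modEq,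
    zpow_eq_zpow_iff_modEq, hx.orderOf_eq, hy.orderOf_eq]

theorem nonempty_mulEquiv {H : Type*} [Group H] {y : ℕ → H} (hx : IsTower p x)
    (hy : IsTower p y) (hxG : towerSubgroup x = ⊤) (hyH : towerSubgroup y = ⊤) :
    Nonempty (G ≃* H) := by
  choose n k hnk using hx.exists_zpow_eq hxG
  let φ (g : G) : H := y (n g) ^ k g
  have hφ (m : ℕ) (j : ℤ) : φ (x m ^ j) = y m ^ j :=
    (hx.zpow_eq_zpow_iff hy _ _ _ _).mp (hnk _)
  have hφ_mul (g g' : G) : φ (g * g') = φ g * φ g' := by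
    rw [← hnk g, ← hnk g', hφ, hφ, hx.zpow_eq_zpow_add _ (n g'), hy.zpow_eq_zpow_add _ (n g'),
      hx.zpow_eq_zpow_add (n g') (n g), hy.zpow_eq_zpow_add (n g') (n g), add_comm (n g'),
      ← zpow_add, ← zpow_add, hφ]
  refine ⟨MulEquiv.ofBijective (MonoidHom.mk' φ hφ_mul) ⟨fun g g' h => ?_, fun h => ?_⟩⟩
  · rw [← hnk g, ← hnk g']
    exact (hx.zpow_eq_zpow_iff hy _ _ _ _).mpr h
  · obtain ⟨m, j, rfl⟩ := hy.exists_zpow_eq hyH h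
    exact ⟨x m ^ j, hφ m j⟩

end IsTower

theorem setOf_towerSubgroup_finite [Fact p.Prime] {N : ℕ}
    (hN : ∀ s : Finset G, IsIndepSet (powerGraph G) ↑s → s.card ≤ N) :
    {H : Subgroup G | ∃ x, IsTower p x ∧ towerSubgroup x = H}.Finite := by
  by_contra h
  obtain ⟨𝓗, h𝓗, hcard⟩ := Set.Infinite.exists_subset_card_eq h (N + 1)
  have := card_le_of_pairwise_finite_inf hN (𝓗 := 𝓗)
    (fun H hH => by
      obtain ⟨x, hx, rfl⟩ := h𝓗 hH
      exact hx.towerSubgroup_infinite)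
    (fun H hH K hK hne => by
      obtain ⟨x, hx, rfl⟩ := h𝓗 hH
      obtain ⟨y, hy, rfl⟩ := h𝓗 hK
      exact hx.inf_finite hy hne)
  omega

theorem exists_isTower_of_hasUnboundedRoots [hp : Fact p.Prime] (hG : IsPGroup p G) {N : ℕ}
    (hN : ∀ s : Finset G, IsIndepSet (powerGraph G) ↑s → s.card ≤ N) {a : G}
    (ha : HasUnboundedRoots a) : ∃ x, IsTower p x ∧ a ∈ towerSubgroup x := by
  -- level `i` of the Kőnig tree: the elements of order `p ^ i` comparable with `a`
  let L (i : ℕ) := {z : G // orderOf z = p ^ i ∧ (a ∈ zpowers z ∨ z ∈ zpowers a)}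
  have hdown {z w : G} {j : ℕ} (hz : orderOf z = p ^ j) (hw : w ∈ zpowers z)
      (hza : a ∈ zpowers z ∨ z ∈ zpowers a) : a ∈ zpowers w ∨ w ∈ zpowers a :=
    hza.elim (mem_zpowers_or_mem_zpowers_of_orderOf_eq_prime_pow hz · hw)
      fun h => Or.inr (zpowers_le.mpr h hw)
  let π {i j : ℕ} (hij : i ≤ j) (z : L j) : L i :=
    ⟨z.1 ^ p ^ (j - i), orderOf_pow_prime_pow_sub z.2.1 hij,
      hdown z.2.1 (npow_mem_zpowers _ _) z.2.2⟩
  have hfin (i : ℕ) : Finite (L i) :=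
    ((setOf_orderOf_eq_finite hN (pow_ne_zero i hp.out.ne_zero)).subset
      fun _ hz => hz.1).to_subtype
  have hne (i : ℕ) : Nonempty (L i) := by
    obtain ⟨y, hay, hy⟩ := ha (p ^ i)
    obtain ⟨e, he⟩ := (IsPGroup.iff_orderOf.mp hG) y
    have hie : i ≤ e := (Nat.pow_le_pow_iff_right hp.out.one_lt).mp (he ▸ hy)
    exact ⟨⟨y ^ p ^ (e - i), orderOf_pow_prime_pow_sub he hie,
      hdown he (npow_mem_zpowers _ _) (Or.inl hay)⟩⟩
  obtain ⟨f, hf⟩ := exists_seq_forall_proj_of_forall_finite π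
    (fun i z => Subtype.ext (by simp [π]))
    (fun i j k hij hjk z => Subtype.ext (by
      simp only [π, ← pow_mul, ← pow_add]
      congr 2
      omega))
    (fun i _ => Set.toFinite _)
  obtain ⟨k, hk⟩ := (IsPGroup.iff_orderOf.mp hG) a
  let x (n : ℕ) : G := (f n).1
  have hx : IsTower p x :=
    ⟨fun n => (f n).2.1, fun n => by simpa [π] using congrArg Subtype.val (hf (Nat.le_succ n))⟩
  refine ⟨x, hx, hx.mem_towerSubgroup.mpr ⟨k, (f k).2.2.elim id fun h => ?_⟩⟩
  exact mem_zpowers_of_orderOf_dvd (hG.isOfFinOrder hp.out.ne_zero a) (mem_zpowers a) h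
    (by rw [hk, (f k).2.1])

theorem exists_isTower_pruferGroup [hp : Fact p.Prime] :
    ∃ y : ℕ → Multiplicative (pruferGroup p), IsTower p y ∧ towerSubgroup y = ⊤ := by
  have hp0 : (p : ℚ) ≠ 0 := Nat.cast_ne_zero.mpr hp.out.ne_zero
  have hmk {q : ℚ} : (q : ℚ ⧸ AddSubgroup.zmultiples (1 : ℚ)) = 0 ↔ ∃ z : ℤ, (z : ℚ) = q := by
    simp [QuotientAddGroup.eq_zero_iff, AddSubgroup.mem_zmultiples_iff]
  let y (n : ℕ) : Multiplicative (pruferGroup p) :=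
    Multiplicative.ofAdd ⟨(((p : ℚ) ^ n)⁻¹ : ℚ), n, by
      rw [← QuotientAddGroup.mk_nsmul, hmk]
      exact ⟨1, by simp [hp0]⟩⟩
  have hy : IsTower p y := by
    refine IsTower.of_pow_succ ?_ ?_ fun n => ?_
    · rw [← ofAdd_zero, EmbeddingLike.apply_eq_iff_eq]
      exact Subtype.ext (hmk.mpr ⟨1, by simp⟩)
    · rw [← ofAdd_zero, ne_eq, EmbeddingLike.apply_eq_iff_eq, Subtype.ext_iff]
      intro h
      obtain ⟨z, hz⟩ := hmk.mp h
      have hpz : (p : ℤ) ∣ 1 :=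
        ⟨z, by exact_mod_cast (by field_simp at hz ⊢; linarith : (1 : ℚ) = p * z)⟩
      exact hp.out.one_lt.ne' (Nat.dvd_one.mp (Int.natCast_dvd_natCast.mp hpz))
    · rw [← ofAdd_nsmul, EmbeddingLike.apply_eq_iff_eq]
      refine Subtype.ext ?_
      simp only [AddSubgroup.coe_nsmul, ← QuotientAddGroup.mk_nsmul, nsmul_eq_mul]
      congr 1
      field_simp
      ring
  refine ⟨y, hy, (eq_top_iff' _).mpr fun t => hy.mem_towerSubgroup.mpr ?_⟩
  obtain ⟨⟨a, n, hn⟩, rfl⟩ : ∃ a, Multiplicative.ofAdd a = t := ⟨t.toAdd, rfl⟩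
  obtain ⟨q, rfl⟩ := QuotientAddGroup.mk_surjective a
  obtain ⟨z, hz⟩ := hmk.mp (by rwa [← QuotientAddGroup.mk_nsmul] at hn)
  refine ⟨n, mem_zpowers_iff.mpr ⟨z, ?_⟩⟩
  rw [← ofAdd_zsmul, EmbeddingLike.apply_eq_iff_eq]
  refine Subtype.ext ?_
  simp only [AddSubgroup.coe_zsmul, ← QuotientAddGroup.mk_zsmul, zsmul_eq_mul]
  congr 1
  rw [hz, nsmul_eq_mul]
  field_simp
  push_cast
  ring

end

theorem pGroup_finite_independence_number (p : ℕ) (hp : p.Prime) (G : Type*) [Group G]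
    (hG : IsPGroup p G)
    (h : ∃ N : ℕ, ∀ s : Finset G, IsIndepSet (powerGraph G) ↑s → s.card ≤ N) :
    Finite G ∨ Nonempty (G ≃* Multiplicative (pruferGroup p)) := by
  have : Fact p.Prime := ⟨hp⟩
  obtain ⟨N, hN⟩ := h
  rcases finite_or_infinite G with hfin | hinf
  · exact Or.inl hfin
  have hroots (g : G) (hg : g ∉ {a | ¬HasUnboundedRoots a}) :
      ∃ H ∈ {H | ∃ x, IsTower p x ∧ towerSubgroup x = H}, g ∈ H := by
    obtain ⟨x, hx, hgx⟩ := exists_isTower_of_hasUnboundedRoots hG hN (not_not.mp hg)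
    exact ⟨_, ⟨x, hx, rfl⟩, hgx⟩
  obtain ⟨_, ⟨x, hx, rfl⟩, hxtop⟩ := exists_eq_top_of_covers
    (setOf_not_hasUnboundedRoots_finite (hG.isOfFinOrder hp.ne_zero) hN)
    (setOf_towerSubgroup_finite hN)
    (by rintro _ ⟨x, hx, rfl⟩ _ ⟨y, hy, rfl⟩ hne; exact hx.inf_finite hy hne) hroots
  obtain ⟨y, hy, hytop⟩ := exists_isTower_pruferGroup (p := p)
  exact Or.inr (hx.nonempty_mulEquiv hy hxtop hytop)
end

section
/- For any group G, every clique in the power graph of G is at most countably infinite. -/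
/-!
Split a clique `s` of the power graph by element order. Two clique elements of the same finite
order `n` generate cyclic subgroups one inside the other, hence equal, so all of them lie in a
single cyclic group of order `n`. For the elements of infinite order, fix one of them, `x`: every
other one is a power of `x` or an `n`-th root of `x` for some `n ≠ 0`, and inside the clique
`n`-th roots of elements of infinite order are unique.
-/

open Subgroup

section Group

variable {G : Type*} [Group G]

theorem mem_zpowers_of_orderOf_eq {x y : G} (hx : IsOfFinOrder x) (hy : y ∈ zpowers x)
    (h : orderOf y = orderOf x) : x ∈ zpowers y := by
  have : Finite (zpowers x) := (finite_zpowers.2 hx).to_subtype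
  have hle : zpowers y ≤ zpowers x := zpowers_le.2 hy
  rw [eq_of_le_of_card_ge hle (by rw [Nat.card_zpowers, Nat.card_zpowers, h])]
  exact mem_zpowers x

theorem pow_eq_self_of_pow_pow_eq {y : G} {m n : ℕ} (hy : ¬IsOfFinOrder y) (hn : n ≠ 0)
    (h : (y ^ m) ^ n = y ^ n) : y ^ m = y := by
  rw [← pow_mul] at h
  rw [(Nat.mul_eq_right hn).1 (injective_pow_iff_not_isOfFinOrder.2 hy h), pow_one]

end Group

namespace powerGraph

variable {G : Type*} [Group G] {s : Set G}

theorem exists_pow_of_isClique (hs : (powerGraph G).IsClique s) {x y : G} (hx : x ∈ s)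
    (hy : y ∈ s) : ∃ n : ℕ, y = x ^ n ∨ x = y ^ n := by
  obtain rfl | hne := eq_or_ne x y
  · exact ⟨1, .inl (pow_one x).symm⟩
  · exact (hs hx hy hne).2

theorem subset_zpowers_of_isClique (hs : (powerGraph G).IsClique s) {x : G} (hx : x ∈ s)
    (hfin : IsOfFinOrder x) : {y ∈ s | orderOf y = orderOf x} ⊆ zpowers x := by
  rintro y ⟨hy, hord⟩
  obtain ⟨n, rfl | rfl⟩ := exists_pow_of_isClique hs hx hy
  · exact pow_mem (mem_zpowers x) n
  · have hyfin : IsOfFinOrder y := orderOf_pos_iff.1 (hord ▸ hfin.orderOf_pos)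
    exact mem_zpowers_of_orderOf_eq hyfin (pow_mem (mem_zpowers y) n) hord.symm

theorem finite_orderOf_eq_of_isClique (hs : (powerGraph G).IsClique s) {n : ℕ} (hn : n ≠ 0) :
    {y ∈ s | orderOf y = n}.Finite := by
  obtain he | ⟨x, hx, rfl⟩ := Set.eq_empty_or_nonempty {y ∈ s | orderOf y = n}
  · exact he ▸ Set.finite_empty
  · have hfin : IsOfFinOrder x := orderOf_pos_iff.1 (Nat.pos_of_ne_zero hn)
    exact (finite_zpowers.2 hfin).subset (subset_zpowers_of_isClique hs hx hfin)

theorem injOn_pow_of_isClique (hs : (powerGraph G).IsClique s) {n : ℕ} (hn : n ≠ 0) :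
    Set.InjOn (· ^ n) {y ∈ s | ¬IsOfFinOrder y} := by
  rintro y ⟨hy, hyinf⟩ z ⟨hz, hzinf⟩ (h : y ^ n = z ^ n)
  obtain ⟨m, rfl | rfl⟩ := exists_pow_of_isClique hs hy hz
  · exact (pow_eq_self_of_pow_pow_eq hyinf hn h.symm).symm
  · exact pow_eq_self_of_pow_pow_eq hzinf hn h

theorem countable_not_isOfFinOrder_of_isClique (hs : (powerGraph G).IsClique s) :
    {y ∈ s | ¬IsOfFinOrder y}.Countable := by
  set S := {y ∈ s | ¬IsOfFinOrder y}
  obtain he | ⟨x, hx, hxinf⟩ := S.eq_empty_or_nonempty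
  · exact he ▸ Set.countable_empty
  have hcover : S ⊆ Set.range (x ^ ·) ∪ ⋃ n : ℕ, {y ∈ S | y ^ (n + 1) = x} := by
    rintro y hyS
    obtain ⟨m, rfl | rfl⟩ := exists_pow_of_isClique hs hx hyS.1
    · exact .inl ⟨m, rfl⟩
    · obtain _ | n := m
      · exact absurd (pow_zero y ▸ IsOfFinOrder.one) hxinf
      · exact .inr (Set.mem_iUnion.2 ⟨n, hyS, rfl⟩)
  refine .mono hcover ((Set.countable_range _).union (Set.countable_iUnion fun n => ?_))
  exact Set.Subsingleton.countable fun y hy z hz => injOn_pow_of_isClique hs n.succ_ne_zero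
    hy.1 hz.1 (hy.2.trans hz.2.symm)

end powerGraph

theorem powerGraph_clique_countable (G : Type*) [Group G]
    (s : Set G) (hs : (powerGraph G).IsClique s) : s.Countable := by
  have hcover : s ⊆ ⋃ n : ℕ, {y ∈ s | orderOf y = n} := fun y hy =>
    Set.mem_iUnion.2 ⟨orderOf y, hy, rfl⟩
  refine .mono hcover (Set.countable_iUnion fun n => ?_)
  obtain rfl | hn := eq_or_ne n 0
  · simpa only [orderOf_eq_zero_iff] using powerGraph.countable_not_isOfFinOrder_of_isClique hs
  · exact (powerGraph.finite_orderOf_eq_of_isClique hs hn).countable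
end

section
/- Let P be a pre-ordered set in which every chain has size at most m, and whose maximum chain size is m. Then the comparability graph of P is perfect, and its clique number and chromatic number both equal m. -/
/-!
Mirsky's argument: colour each element by its height, i.e. by the length of the longest strictly
increasing sequence below it. Bounded chains bound the heights, and comparable elements have
different heights. In a preorder, distinct but equivalent elements would share a height, so the
heights are taken in a partial order refining `≤` that orders each equivalence class along an
injection into `Cardinal`. A chain of size `m` is an `m`-clique, so `m` colours are also needed.
Each induced subgraph is again a comparability graph, which gives perfection.
-/

/-- A graph is perfect if every finite induced subgraph has chromatic number equal to its
clique number. -/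
def SimpleGraph.IsPerfect {V : Type*} (G' : SimpleGraph V) : Prop :=
  ∀ s : Finset V,
    (SimpleGraph.induce (↑s : Set V) G').chromaticNumber =
      ((SimpleGraph.induce (↑s : Set V) G').cliqueNum : ℕ∞)

/-- The comparability graph of a pre-ordered set. -/
def compGraph (P : Type*) [Preorder P] : SimpleGraph P where
  Adj x y := x ≠ y ∧ (x ≤ y ∨ y ≤ x)
  symm := ⟨by rintro x y ⟨h, hc⟩; exact ⟨h.symm, hc.symm⟩⟩
  loopless := ⟨by rintro x ⟨h, _⟩; exact h rfl⟩

open SimpleGraph Order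

universe u

section Preorder

variable {P : Type u} [Preorder P]

lemma isClique_compGraph_iff {s : Set P} : (compGraph P).IsClique s ↔ IsChain (· ≤ ·) s :=
  forall₄_congr fun _ _ _ _ ↦ ⟨fun h hxy ↦ (h hxy).2, fun h hxy ↦ ⟨hxy, h hxy⟩⟩

lemma induce_compGraph (s : Set P) : (compGraph P).induce s = compGraph s := by
  ext x y
  exact and_congr_left' Subtype.coe_ne_coe

lemma height_lt_of_chain_card_le {Q : Type*} [Preorder Q] {f : Q → P} (hf : Monotone f)
    (hf' : Function.Injective f) {m : ℕ}
    (hbound : ∀ s : Finset P, IsChain (· ≤ ·) (s : Set P) → s.card ≤ m) (x : Q) :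
    height x < m := by
  classical
  by_contra! hx
  obtain ⟨p, -, hlen⟩ := exists_series_of_le_height x hx
  have hchain : IsChain (· ≤ ·) ((Finset.univ.image (f ∘ p) : Finset P) : Set P) := by
    simpa [Function.comp_def] using (hf.comp p.monotone).isChain_range
  have := hbound _ hchain
  rw [Finset.card_image_of_injective _ (hf'.comp p.strictMono.injective), Finset.card_univ,
    Fintype.card_fin] at this
  omega

noncomputable def tieBreakKey (x : P) : Antisymmetrization P (· ≤ ·) ×ₗ Cardinal.{u} :=
  toLex (toAntisymmetrization (· ≤ ·) x, embeddingToCardinal x)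

end Preorder

def TieBreak (P : Type u) : Type u := P

section TieBreak

variable {P : Type u} [Preorder P]

def toTieBreak : P ≃ TieBreak P := Equiv.refl _

noncomputable instance : PartialOrder (TieBreak P) :=
  PartialOrder.lift (tieBreakKey ∘ toTieBreak.symm)
    fun _ _ h ↦ embeddingToCardinal.injective (congrArg (fun z ↦ (ofLex z).2) h)

lemma toTieBreak_le_toTieBreak {x y : P} :
    toTieBreak x ≤ toTieBreak y ↔ tieBreakKey x ≤ tieBreakKey y :=
  Iff.rfl

lemma monotone_toTieBreak_symm : Monotone (toTieBreak.symm : TieBreak P → P) := by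
  intro a b h
  rw [← toTieBreak.apply_symm_apply a, ← toTieBreak.apply_symm_apply b,
    toTieBreak_le_toTieBreak, tieBreakKey, tieBreakKey, Prod.Lex.toLex_le_toLex,
    toAntisymmetrization_lt_toAntisymmetrization_iff] at h
  rcases h with h | ⟨h, -⟩
  · exact h.le
  · exact toAntisymmetrization_le_toAntisymmetrization_iff.1 h.le

lemma toTieBreak_le_or_ge {x y : P} (h : x ≤ y ∨ y ≤ x) :
    toTieBreak x ≤ toTieBreak y ∨ toTieBreak y ≤ toTieBreak x := by
  wlog hxy : x ≤ y generalizing x y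
  · exact (this h.symm (h.resolve_left hxy)).symm
  simp only [toTieBreak_le_toTieBreak, tieBreakKey, Prod.Lex.toLex_le_toLex,
    toAntisymmetrization_lt_toAntisymmetrization_iff]
  by_cases hyx : y ≤ x
  · have hclass : toAntisymmetrization (· ≤ ·) x = toAntisymmetrization (· ≤ ·) y :=
      le_antisymm (toAntisymmetrization_mono hxy) (toAntisymmetrization_mono hyx)
    rcases le_total (embeddingToCardinal x) (embeddingToCardinal y) with h | h
    · exact Or.inl (Or.inr ⟨hclass, h⟩)
    · exact Or.inr (Or.inr ⟨hclass.symm, h⟩)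
  · exact Or.inl (Or.inl (hxy.lt_of_not_ge hyx))

end TieBreak

lemma eq_of_height_eq {Q : Type*} [PartialOrder Q] {a b : Q} (hab : a ≤ b ∨ b ≤ a)
    (hfin : height a < ⊤) (h : height a = height b) : a = b := by
  by_contra hne
  rcases hab with hab | hba
  · exact (height_strictMono (hab.lt_of_ne hne) hfin).ne h
  · exact (height_strictMono (hba.lt_of_ne (Ne.symm hne)) (h ▸ hfin)).ne h.symm

section Colouring

variable {P : Type u} [Preorder P] {m : ℕ}
  (hbound : ∀ s : Finset P, IsChain (· ≤ ·) (s : Set P) → s.card ≤ m)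
include hbound

lemma colorable_compGraph : (compGraph P).Colorable m := by
  have hlt (x : P) : height (toTieBreak x) < m :=
    height_lt_of_chain_card_le monotone_toTieBreak_symm toTieBreak.symm.injective hbound _
  have hcast (x : P) : ((height (toTieBreak x)).toNat : ℕ∞) = height (toTieBreak x) :=
    ENat.natCast_toNat (hlt x).ne_top
  refine ⟨Coloring.mk (fun x ↦ ⟨(height (toTieBreak x)).toNat,
    by exact_mod_cast (hcast x).trans_lt (hlt x)⟩) ?_⟩
  rintro x y ⟨hne, hcomp⟩ hxy
  refine hne (toTieBreak.injective (eq_of_height_eq (toTieBreak_le_or_ge hcomp)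
    ((hlt x).trans (ENat.natCast_lt_top m)) ?_))
  rw [← hcast x, ← hcast y, Fin.mk.inj hxy]

lemma chromaticNumber_compGraph {t : Finset P} (ht : IsChain (· ≤ ·) (t : Set P))
    (htm : t.card = m) : (compGraph P).chromaticNumber = m :=
  le_antisymm (colorable_compGraph hbound).chromaticNumber_le
    (htm ▸ (isClique_compGraph_iff.2 ht).card_le_chromaticNumber)

end Colouring

lemma isPerfect_compGraph (P : Type u) [Preorder P] : (compGraph P).IsPerfect := by
  intro s
  rw [induce_compGraph]
  obtain ⟨t, ht⟩ := (compGraph s).exists_isNClique_cliqueNum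
  exact chromaticNumber_compGraph
    (fun u hu ↦ IsClique.card_le_cliqueNum (tc := isClique_compGraph_iff.2 hu))
    (isClique_compGraph_iff.1 ht.isClique) ht.card_eq

theorem comparability_graph_perfect (P : Type*) [Preorder P] (m : ℕ)
    (hbound : ∀ s : Finset P, IsChain (· ≤ ·) (↑s : Set P) → s.card ≤ m)
    (hmax : ∃ s : Finset P, IsChain (· ≤ ·) (↑s : Set P) ∧ s.card = m) :
    (compGraph P).IsPerfect ∧
      (⨆ s : {s : Finset P // (compGraph P).IsClique ↑s}, (s.1.card : ℕ∞)) = m ∧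
      (compGraph P).chromaticNumber = m := by
  obtain ⟨t, ht, htm⟩ := hmax
  refine ⟨isPerfect_compGraph P, le_antisymm ?_ ?_, chromaticNumber_compGraph hbound ht htm⟩
  · exact iSup_le fun s ↦ by exact_mod_cast hbound s.1 (isClique_compGraph_iff.1 s.2)
  · exact htm ▸ le_iSup_of_le ⟨t, isClique_compGraph_iff.2 ht⟩ le_rfl
end

section
/- If G is a group of finite exponent n, then the chromatic number of the power graph of G equals its clique number, and both are at most n. -/
/-! In a torsion group, distinct `x` and `y` are adjacent in the power graph iff the cyclic
subgroups `⟨x⟩` and `⟨y⟩` are comparable. Breaking ties between generators of the same cyclic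
subgroup by an arbitrary linear order turns this preorder into a partial order whose comparability
graph is the power graph. In a comparability graph the cliques are the chains, and colouring every
element by its height is proper and uses no more colours than the largest chain has elements.
Finally, an element of maximal order in a finite clique generates a cyclic subgroup containing the
whole clique, so cliques have at most `exponent G` elements. -/

open SimpleGraph Order

namespace SimpleGraph

theorem chromaticNumber_eq_iSup_card_isClique {V : Type*} (G : SimpleGraph V) {N : ℕ}
    (hN : ∀ s : Finset V, G.IsClique (s : Set V) → s.card ≤ N)
    (hcol : ∀ M : ℕ, (∀ s : Finset V, G.IsClique (s : Set V) → s.card ≤ M) → G.Colorable M) :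
    G.chromaticNumber = ⨆ s : {s : Finset V // G.IsClique ↑s}, (s.1.card : ℕ∞) := by
  set ω := ⨆ s : {s : Finset V // G.IsClique ↑s}, (s.1.card : ℕ∞)
  have hωN : ω ≤ N := iSup_le fun s => Nat.cast_le.mpr (hN s.1 s.2)
  have hω : (ω.toNat : ℕ∞) = ω := ENat.natCast_toNat (hωN.trans_lt (ENat.natCast_lt_top N)).ne
  have hclique : ∀ s : Finset V, G.IsClique (s : Set V) → s.card ≤ ω.toNat := fun s hs => by
    rw [← Nat.cast_le (α := ℕ∞), hω]
    exact le_iSup (fun s : {s : Finset V // G.IsClique ↑s} => (s.1.card : ℕ∞)) ⟨s, hs⟩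
  refine le_antisymm ?_ (iSup_le fun s => s.2.card_le_chromaticNumber)
  exact hω ▸ (hcol _ hclique).chromaticNumber_le

end SimpleGraph

section Comparability

variable {α : Type*} [PartialOrder α]

theorem LTSeries.length_lt_of_isClique_card_le {N : ℕ}
    (h : ∀ s : Finset α, (fromRel (· < ·) : SimpleGraph α).IsClique (s : Set α) → s.card ≤ N)
    (p : LTSeries α) : p.length < N := by
  classical
  have hclique : (fromRel (· < ·) : SimpleGraph α).IsClique (Set.range p) := by
    rintro _ ⟨i, rfl⟩ _ ⟨j, rfl⟩ hij
    refine (fromRel_adj _ _ _).2 ⟨hij, ?_⟩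
    rcases lt_trichotomy i j with hlt | rfl | hlt
    · exact .inl (p.strictMono hlt)
    · exact absurd rfl hij
    · exact .inr (p.strictMono hlt)
  have hcard := h (Finset.univ.image p) (by rwa [Finset.coe_image, Finset.coe_univ, Set.image_univ])
  rw [Finset.card_image_of_injective _ p.strictMono.injective, Finset.card_univ,
    Fintype.card_fin] at hcard
  omega

theorem colorable_fromRel_lt_of_isClique_card_le {N : ℕ}
    (h : ∀ s : Finset α, (fromRel (· < ·) : SimpleGraph α).IsClique (s : Set α) → s.card ≤ N) :
    (fromRel (· < ·) : SimpleGraph α).Colorable N := by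
  have hheight : ∀ x : α, height x < N := fun x => by
    have hN : 0 < N := LTSeries.length_lt_of_isClique_card_le h (RelSeries.singleton _ x)
    calc height x ≤ (N - 1 : ℕ) := height_le_iff'.2 fun p _ => by
          have := LTSeries.length_lt_of_isClique_card_le h p
          exact_mod_cast (by omega : p.length ≤ N - 1)
      _ < N := by exact_mod_cast Nat.sub_lt hN one_pos
  have hfinite : ∀ x : α, height x < ⊤ := fun x => (hheight x).trans (ENat.natCast_lt_top N)
  have hcast : ∀ x : α, ((height x).toNat : ℕ∞) = height x := fun x =>
    ENat.natCast_toNat (hfinite x).ne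
  refine (colorable_iff_exists_bdd_nat_coloring N).2
    ⟨Coloring.mk (fun x => (height x).toNat) fun {x y} hxy heq => ?_, fun x => ?_⟩
  · have hne : height x ≠ height y := by
      rcases ((fromRel_adj _ _ _).1 hxy).2 with hlt | hlt
      · exact (height_strictMono hlt (hfinite x)).ne
      · exact (height_strictMono hlt (hfinite y)).ne'
    exact hne (by rw [← hcast x, ← hcast y, heq])
  · change (height x).toNat < N
    rw [← Nat.cast_lt (α := ℕ∞), hcast]
    exact hheight x

end Comparability

theorem Prod.Lex.lt_or_lt_iff {β γ : Type*} [PartialOrder β] [LinearOrder γ] {x y : β ×ₗ γ} :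
    x < y ∨ y < x ↔ x ≠ y ∧ ((ofLex x).1 ≤ (ofLex y).1 ∨ (ofLex y).1 ≤ (ofLex x).1) := by
  obtain ⟨⟨a, c⟩, rfl⟩ := toLex.surjective x
  obtain ⟨⟨b, d⟩, rfl⟩ := toLex.surjective y
  simp only [Prod.Lex.toLex_lt_toLex', ofLex_toLex, ne_eq, EmbeddingLike.apply_eq_iff_eq,
    Prod.mk.injEq]
  grind

section PowerGraph

open Subgroup

variable {G : Type*} [Group G]

theorem powerGraph_adj_iff (hG : IsMulTorsion G) {x y : G} :
    (powerGraph G).Adj x y ↔ x ≠ y ∧ (zpowers x ≤ zpowers y ∨ zpowers y ≤ zpowers x) := by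
  simp only [powerGraph, zpowers_le, ← (hG _).mem_powers_iff_mem_zpowers, Submonoid.mem_powers_iff,
    exists_or, eq_comm, or_comm]

theorem powerGraph_colorable_of_isClique_card_le (hG : IsMulTorsion G) {N : ℕ}
    (h : ∀ s : Finset G, (powerGraph G).IsClique (s : Set G) → s.card ≤ N) :
    (powerGraph G).Colorable N := by
  let f : G → Subgroup G ×ₗ Cardinal := fun x => toLex (zpowers x, embeddingToCardinal x)
  have hf : f.Injective := fun x y hxy =>
    embeddingToCardinal.injective (congrArg (fun z => (ofLex z).2) hxy)
  let _ : PartialOrder G := PartialOrder.lift f hf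
  have hgraph : powerGraph G = fromRel (· < ·) := by
    ext x y
    rw [powerGraph_adj_iff hG, fromRel_adj,
      show x < y ∨ y < x ↔ _ from Prod.Lex.lt_or_lt_iff (x := f x) (y := f y), hf.ne_iff,
      ← and_assoc, and_self]
    rfl
  rw [hgraph] at h ⊢
  exact colorable_fromRel_lt_of_isClique_card_le h

theorem exists_subset_zpowers_of_isClique (hG : IsMulTorsion G) {s : Finset G}
    (hs : (powerGraph G).IsClique (s : Set G)) (hne : s.Nonempty) :
    ∃ g : G, (s : Set G) ⊆ zpowers g := by
  obtain ⟨g, hg, hmax⟩ := s.exists_max_image orderOf hne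
  refine ⟨g, fun a ha => ?_⟩
  rcases eq_or_ne g a with rfl | hga
  · exact mem_zpowers g
  rcases ((powerGraph_adj_iff hG).1 (hs hg ha hga)).2 with hle | hle
  · have : Finite (zpowers a) := (hG a).finite_zpowers
    have heq : zpowers g = zpowers a := eq_of_le_of_card_ge hle <| by
      rw [Nat.card_zpowers, Nat.card_zpowers]
      exact hmax a ha
    exact heq ▸ mem_zpowers a
  · exact zpowers_le.mp hle

theorem card_le_exponent_of_isClique (hG : Monoid.ExponentExists G) {s : Finset G}
    (hs : (powerGraph G).IsClique (s : Set G)) : s.card ≤ Monoid.exponent G := by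
  rcases s.eq_empty_or_nonempty with rfl | hne
  · simp
  obtain ⟨g, hsub⟩ := exists_subset_zpowers_of_isClique (ExponentExists.isMulTorsion hG) hs hne
  calc s.card = (s : Set G).ncard := (Set.ncard_coe_finset s).symm
    _ ≤ (zpowers g : Set G).ncard := Set.ncard_le_ncard hsub hG.isOfFinOrder.finite_zpowers
    _ = orderOf g := by rw [← Nat.card_coe_set_eq]; exact Nat.card_zpowers g
    _ ≤ Monoid.exponent G := Monoid.orderOf_le_exponent hG g

end PowerGraph

theorem powerGraph_chromatic_eq_clique_of_bounded_exponent (G : Type*) [Group G] (n : ℕ)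
    (hn : 0 < n) (hexp : Monoid.exponent G = n) :
    (powerGraph G).chromaticNumber =
        (⨆ s : {s : Finset G // (powerGraph G).IsClique ↑s}, (s.1.card : ℕ∞)) ∧
      (powerGraph G).chromaticNumber ≤ n ∧
      (⨆ s : {s : Finset G // (powerGraph G).IsClique ↑s}, (s.1.card : ℕ∞)) ≤ n := by
  have hG : Monoid.ExponentExists G := Monoid.exponent_pos.mp (hexp ▸ hn)
  have hclique : ∀ s : Finset G, (powerGraph G).IsClique (s : Set G) → s.card ≤ n :=
    fun s hs => hexp ▸ card_le_exponent_of_isClique hG hs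
  have hω : (⨆ s : {s : Finset G // (powerGraph G).IsClique ↑s}, (s.1.card : ℕ∞)) ≤ n :=
    iSup_le fun s => Nat.cast_le.mpr (hclique s.1 s.2)
  have hχ := (powerGraph G).chromaticNumber_eq_iSup_card_isClique hclique fun _ =>
    powerGraph_colorable_of_isClique_card_le (ExponentExists.isMulTorsion hG)
  exact ⟨hχ, hχ ▸ hω, hω⟩
end

section
/- Let H be a subgroup of finite index in a group G. Then the power graph of H has finite clique number if and only if the power graph of G has finite clique number. -/
open Finset Subgroup

section

variable {G : Type*} [Group G]

lemma Subgroup.exists_pos_forall_pow_mem (H : Subgroup G) [H.FiniteIndex] :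
    ∃ m : ℕ, 0 < m ∧ ∀ x : G, x ^ m ∈ H :=
  ⟨H.normalCore.index, Nat.pos_of_ne_zero FiniteIndex.index_ne_zero,
    fun x => H.normalCore_le (H.normalCore.pow_index_mem x)⟩

lemma SimpleGraph.IsClique.image_powerGraph {K : Type*} [Group K] {f : G → K}
    (hf : ∀ (x : G) (n : ℕ), f (x ^ n) = f x ^ n) {s : Set G}
    (hs : (powerGraph G).IsClique s) : (powerGraph K).IsClique (f '' s) := by
  rintro _ ⟨x, hx, rfl⟩ _ ⟨y, hy, rfl⟩ hne
  obtain ⟨-, n, rfl | rfl⟩ := hs hx hy (ne_of_apply_ne f hne)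
  · exact ⟨hne, n, Or.inl (hf x n)⟩
  · exact ⟨hne, n, Or.inr (hf y n)⟩

lemma isOfFinOrder_of_pow_pow_eq {x : G} {m n : ℕ} (hm : 0 < m) (hn : n ≠ 1)
    (h : (x ^ n) ^ m = x ^ m) : IsOfFinOrder x := by
  by_contra hx
  have hnm : n * m = 1 * m :=
    injective_pow_iff_not_isOfFinOrder.mpr hx (by simpa only [one_mul, pow_mul] using h)
  exact hn (Nat.eq_of_mul_eq_mul_right hm hnm)

lemma isOfFinOrder_of_adj_of_pow_eq {x y : G} (hxy : (powerGraph G).Adj x y) {m : ℕ}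
    (hm : 0 < m) (h : x ^ m = y ^ m) : IsOfFinOrder x := by
  obtain ⟨hne, n, rfl | rfl⟩ := hxy
  · exact isOfFinOrder_of_pow_pow_eq hm (by rintro rfl; simp at hne) h.symm
  · exact (isOfFinOrder_of_pow_pow_eq hm (by rintro rfl; simp at hne) h).pow

lemma mem_zpowers_of_eq_pow_of_orderOf_le {w z : G} {n : ℕ} (hz : z = w ^ n)
    (hw : IsOfFinOrder w) (hwz : orderOf w ≤ orderOf z) : w ∈ zpowers z := by
  have : Finite (zpowers w) := hw.finite_zpowers.to_subtype
  have hle : zpowers z ≤ zpowers w := zpowers_le_of_mem (hz ▸ npow_mem_zpowers w n)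
  rw [eq_of_le_of_card_ge hle (by simpa only [Nat.card_zpowers] using hwz)]
  exact mem_zpowers w

lemma card_le_of_forall_mem_zpowers_of_pow_eq {z : G} (hz : IsOfFinOrder z) {m : ℕ} (hm : 0 < m)
    {F : Finset G} (hF : ∀ w ∈ F, w ∈ zpowers z ∧ w ^ m = z ^ m) : #F ≤ m := by
  classical
  have : Finite (zpowers z) := hz.finite_zpowers.to_subtype
  have : Fintype (zpowers z) := Fintype.ofFinite _
  let roots : Finset G := ({a : zpowers z | a ^ m = 1} : Finset _).map (Function.Embedding.subtype _)
  calc #F ≤ #roots := card_le_card_of_injOn (· * z⁻¹) ?_ (mul_left_injective z⁻¹).injOn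
    _ = #({a : zpowers z | a ^ m = 1} : Finset _) := card_map _
    _ ≤ m := IsCyclic.card_pow_eq_one_le hm
  intro w hw
  obtain ⟨hwz, hpow⟩ := hF w hw
  have hcomm : Commute w z⁻¹ := by
    obtain ⟨k, rfl⟩ := mem_zpowers_iff.mp hwz
    exact ((Commute.refl z).zpow_left k).inv_right
  refine mem_map.mpr ⟨⟨w * z⁻¹, mul_mem hwz (inv_mem (mem_zpowers z))⟩, ?_, rfl⟩
  simp only [mem_filter, mem_univ, true_and]
  ext
  simp [hcomm.mul_pow, hpow]

lemma SimpleGraph.IsClique.card_le_of_forall_pow_eq {m : ℕ} (hm : 0 < m) {F : Finset G}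
    (hF : (powerGraph G).IsClique (F : Set G)) {c : G} (hc : ∀ w ∈ F, w ^ m = c) : #F ≤ m := by
  rcases le_or_gt #F 1 with h1 | h1
  · omega
  have hfin : ∀ w ∈ F, IsOfFinOrder w := fun w hw => by
    obtain ⟨v, hv, hne⟩ := F.exists_mem_ne h1 w
    exact isOfFinOrder_of_adj_of_pow_eq (hF hw hv hne.symm) hm ((hc w hw).trans (hc v hv).symm)
  obtain ⟨z, hz, hmax⟩ := F.exists_max_image orderOf (card_pos.mp (by omega))
  refine card_le_of_forall_mem_zpowers_of_pow_eq (hfin z hz) hm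
    fun w hw => ⟨?_, (hc w hw).trans (hc z hz).symm⟩
  by_cases hwz : w = z
  · exact hwz ▸ mem_zpowers z
  obtain ⟨-, n, h | h⟩ := hF hz hw (Ne.symm hwz)
  · exact h ▸ npow_mem_zpowers z n
  · exact mem_zpowers_of_eq_pow_of_orderOf_le h (hfin w hw) (hmax w hw)
end

theorem finite_clique_number_iff_of_finiteIndex (G : Type*) [Group G]
    (H : Subgroup G) (hH : H.FiniteIndex) :
    (∃ N : ℕ, ∀ s : Finset H, (powerGraph H).IsClique ↑s → s.card ≤ N) ↔
      (∃ N : ℕ, ∀ s : Finset G, (powerGraph G).IsClique ↑s → s.card ≤ N) := by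
  classical
  constructor
  · rintro ⟨N, hN⟩
    obtain ⟨m, hm, hpow⟩ := H.exists_pos_forall_pow_mem
    let f : G → H := fun x => ⟨x ^ m, hpow x⟩
    have hf : ∀ (x : G) (n : ℕ), f (x ^ n) = f x ^ n := fun x n =>
      Subtype.ext (by simp only [f, SubgroupClass.coe_pow, ← pow_mul, mul_comm])
    refine ⟨m * N, fun s hs => (s.card_le_mul_card_image m fun b _ => ?_).trans
      (Nat.mul_le_mul_left m (hN _ (by rw [coe_image]; exact hs.image_powerGraph hf)))⟩
    exact (hs.subset (filter_subset _ s)).card_le_of_forall_pow_eq hm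
      fun w hw => congrArg Subtype.val (mem_filter.mp hw).2
  · rintro ⟨N, hN⟩
    refine ⟨N, fun s hs => ?_⟩
    simpa using hN (s.map (Function.Embedding.subtype _))
      (by rw [coe_map]; exact hs.image_powerGraph fun _ _ => rfl)
end

section
/- If every vertex of the power graph of a group G has finite degree, then G is a finite group. -/
namespace powerGraph

variable {G : Type*} [Group G]

theorem adj_one {g : G} (hg : g ≠ 1) : (powerGraph G).Adj 1 g :=
  ⟨hg.symm, 0, Or.inr (pow_zero g).symm⟩

theorem neighborSet_one : (powerGraph G).neighborSet 1 = {1}ᶜ :=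
  Set.ext fun g => ⟨fun h : (powerGraph G).Adj 1 g => h.ne', adj_one⟩

end powerGraph

theorem finite_of_all_degrees_finite (G : Type*) [Group G]
    (h : ∀ g : G, ((powerGraph G).neighborSet g).Finite) : Finite G := by
  have hcompl : ({1}ᶜ : Set G).Finite := powerGraph.neighborSet_one (G := G) ▸ h 1
  rw [← Set.finite_univ_iff, ← Set.compl_union_self {1}]
  exact hcompl.union (Set.finite_singleton 1)
end

section
/- Let x, y, z be elements of a group G such that the subgroups ⟨x,y⟩, ⟨x,z⟩ and ⟨y,z⟩ are all cyclic. Then ⟨x,y,z⟩ is cyclic. -/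
/-!
Pairwise cyclic subgroups force `x`, `y`, `z` to commute, so `⟨x, y, z⟩` is a finitely generated
abelian group. By the structure theorem, such a group is cyclic unless it surjects onto
`ZMod p × ZMod p` for some prime `p`. But in a group of exponent `p`, three elements generating
pairwise cyclic subgroups generate a cyclic subgroup (either `u = 1`, or `v` and `w` are powers of
`u` since `⟨u, v⟩` has order `p`), and the images of `x`, `y`, `z` in `ZMod p × ZMod p` would
generate it.
-/

open Subgroup Function

section Closure

variable {G H : Type*} [Group G] [Group H]

theorem commute_of_isCyclic_closure_pair {a b : G} (h : IsCyclic (closure {a, b})) :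
    Commute a b :=
  congrArg Subtype.val <| (IsCyclic.commGroup (α := closure {a, b})).mul_comm
    ⟨a, subset_closure (by simp)⟩ ⟨b, subset_closure (by simp)⟩

theorem isCyclic_closure_image (f : G →* H) {s : Set G} (h : IsCyclic (closure s)) :
    IsCyclic (closure (f '' s)) := by
  rw [← MonoidHom.map_closure]
  exact isCyclic_of_surjective (f.subgroupMap _) (f.subgroupMap_surjective _)

theorem isCyclic_closure_of_isCyclic_closure_image {f : G →* H} (hf : Injective f) {s : Set G}
    (h : IsCyclic (closure (f '' s))) : IsCyclic (closure s) := by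
  rw [← MonoidHom.map_closure] at h
  exact ((closure s).equivMapOfInjective f hf).isCyclic.mpr h

theorem isCyclic_closure_pair_map {K : Subgroup G} (f : K →* H) {a b : K}
    (h : IsCyclic (closure {(a : G), (b : G)})) : IsCyclic (closure {f a, f b}) := by
  rw [← Set.image_pair]
  exact isCyclic_closure_image f <|
    isCyclic_closure_of_isCyclic_closure_image K.subtype_injective (by rwa [Set.image_pair])

theorem isMulCommutative_closure_triple {x y z : G} (hxy : IsCyclic (closure {x, y}))
    (hxz : IsCyclic (closure {x, z})) (hyz : IsCyclic (closure {y, z})) :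
    IsMulCommutative (closure {x, y, z}) := by
  refine isMulCommutative_closure ?_
  simp only [Set.mem_insert_iff, Set.mem_singleton_iff]
  rintro a (rfl | rfl | rfl) b (rfl | rfl | rfl)
  all_goals first
    | rfl
    | exact (commute_of_isCyclic_closure_pair ‹_›).eq
    | exact (commute_of_isCyclic_closure_pair ‹_›).symm.eq

theorem closure_triple_mk_eq_top {x y z : G} :
    closure {(⟨x, subset_closure (by simp)⟩ : closure ({x, y, z} : Set G)),
      ⟨y, subset_closure (by simp)⟩, ⟨z, subset_closure (by simp)⟩} = ⊤ := by
  convert closure_closure_coe_preimage (k := ({x, y, z} : Set G))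
  ext
  simp [Subtype.ext_iff]

end Closure

section PrimeExponent

variable {T : Type*} [Group T] {p : ℕ}

theorem mem_zpowers_of_isCyclic_closure_pair (hp : p.Prime) (hT : ∀ t : T, t ^ p = 1)
    {u v : T} (hu : u ≠ 1) (h : IsCyclic (closure {u, v})) : v ∈ zpowers u := by
  obtain ⟨g, hg⟩ := (closure {u, v}).isCyclic_iff_exists_zpowers_eq_top.mp h
  have hug : zpowers u ≤ zpowers g := zpowers_le.mpr (hg ▸ subset_closure (by simp))
  have : Finite (zpowers g) := Nat.finite_of_card_ne_zero <| by
    rw [Nat.card_zpowers]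
    exact (isOfFinOrder_iff_pow_eq_one.mpr ⟨p, hp.pos, hT g⟩).orderOf_pos.ne'
  have hgu : zpowers u = zpowers g := eq_of_le_of_card_ge hug <| by
    rw [Nat.card_zpowers, Nat.card_zpowers, orderOf_eq_prime (hp := ⟨hp⟩) (hT u) hu]
    exact orderOf_le_of_pow_eq_one hp.pos (hT g)
  rw [hgu, hg]
  exact subset_closure (by simp)

theorem isCyclic_closure_triple_of_pow_prime_eq_one (hp : p.Prime) (hT : ∀ t : T, t ^ p = 1)
    {u v w : T} (huv : IsCyclic (closure {u, v})) (huw : IsCyclic (closure {u, w}))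
    (hvw : IsCyclic (closure {v, w})) : IsCyclic (closure {u, v, w}) := by
  by_cases hu : u = 1
  · rwa [hu, closure_insert_one]
  · have hgen : ({u, v, w} : Set T) ⊆ zpowers u := by
      simp only [Set.insert_subset_iff, Set.singleton_subset_iff, SetLike.mem_coe]
      exact ⟨mem_zpowers u, mem_zpowers_of_isCyclic_closure_pair hp hT hu huv,
        mem_zpowers_of_isCyclic_closure_pair hp hT hu huw⟩
    rw [le_antisymm ((closure_le _).mpr hgen) (zpowers_le.mpr (subset_closure (by simp)))]
    infer_instance

end PrimeExponent

-- The free part is encoded by factors `ZMod 0 = ℤ`.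
theorem AddCommGroup.exists_addEquiv_pi_zmod (M : Type*) [AddCommGroup M] [AddGroup.FG M] :
    ∃ (ι : Type) (_ : Fintype ι) (q : ι → ℕ), Nonempty (M ≃+ ((i : ι) → ZMod (q i))) := by
  obtain ⟨n, ι, _, p, -, e, ⟨f⟩⟩ := equiv_free_prod_directSum_zmod M
  exact ⟨Fin n ⊕ ι, inferInstance, Sum.elim (fun _ => 0) (fun i => p i ^ e i),
    ⟨f.trans <| (Finsupp.addEquivFunOnFinite.prodCongr (DirectSum.addEquivProd _)).trans
      (LinearEquiv.sumPiEquivProdPi ℤ _ _ _).symm.toAddEquiv⟩⟩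

theorem isAddCyclic_pi_zmod {ι : Type*} [Fintype ι] {q : ι → ℕ}
    (hq : Pairwise (Nat.Coprime on q)) : IsAddCyclic ((i : ι) → ZMod (q i)) :=
  isAddCyclic_of_surjective (ZMod.prodEquivPi q hq).toAddMonoidHom
    (ZMod.prodEquivPi q hq).surjective

theorem exists_surjective_pi_zmod_to_zmod_prod {ι : Type*} (q : ι → ℕ) {i j : ι} (hij : i ≠ j)
    {p : ℕ} (hi : p ∣ q i) (hj : p ∣ q j) :
    ∃ f : ((k : ι) → ZMod (q k)) →+ ZMod p × ZMod p, Surjective f := by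
  classical
  refine ⟨((ZMod.castHom hi (ZMod p)).toAddMonoidHom.comp (Pi.evalAddMonoidHom _ i)).prod
    ((ZMod.castHom hj (ZMod p)).toAddMonoidHom.comp (Pi.evalAddMonoidHom _ j)), ?_⟩
  rintro ⟨a, b⟩
  obtain ⟨a', rfl⟩ := ZMod.castHom_surjective hi a
  obtain ⟨b', rfl⟩ := ZMod.castHom_surjective hj b
  exact ⟨Pi.single i a' + Pi.single j b', by simp [hij, hij.symm]⟩

theorem AddCommGroup.exists_surjective_zmod_prod_of_not_isAddCyclic (M : Type*) [AddCommGroup M]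
    [AddGroup.FG M] (h : ¬IsAddCyclic M) :
    ∃ p, p.Prime ∧ ∃ f : M →+ ZMod p × ZMod p, Surjective f := by
  obtain ⟨ι, _, q, ⟨e⟩⟩ := exists_addEquiv_pi_zmod M
  obtain ⟨i, j, hij, hq⟩ : ∃ i j, i ≠ j ∧ ¬(q i).Coprime (q j) := by
    by_contra! hq
    have := isAddCyclic_pi_zmod fun i j hij => hq i j hij
    exact h (isAddCyclic_of_surjective e.symm.toAddMonoidHom e.symm.surjective)
  obtain ⟨f, hf⟩ := exists_surjective_pi_zmod_to_zmod_prod q hij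
    ((Nat.minFac_dvd _).trans (Nat.gcd_dvd_left _ _))
    ((Nat.minFac_dvd _).trans (Nat.gcd_dvd_right _ _))
  exact ⟨_, Nat.minFac_prime hq, f.comp e.toAddMonoidHom, hf.comp e.surjective⟩

theorem CommGroup.exists_surjective_zmod_prod_of_not_isCyclic {G : Type*} [CommGroup G]
    [Group.FG G] (h : ¬IsCyclic G) :
    ∃ p, p.Prime ∧ ∃ f : G →* Multiplicative (ZMod p × ZMod p), Surjective f := by
  obtain ⟨p, hp, f, hf⟩ := AddCommGroup.exists_surjective_zmod_prod_of_not_isAddCyclic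
    (Additive G) (by rwa [isAddCyclic_additive_iff])
  exact ⟨p, hp, AddMonoidHom.toMultiplicativeRight f, hf⟩

theorem pow_eq_one_multiplicative_zmod_prod {p : ℕ} (t : Multiplicative (ZMod p × ZMod p)) :
    t ^ p = 1 := by
  apply Multiplicative.toAdd.injective
  simp [toAdd_pow, Prod.ext_iff]

theorem not_isCyclic_multiplicative_zmod_prod {p : ℕ} (hp : p.Prime) :
    ¬IsCyclic (Multiplicative (ZMod p × ZMod p)) := by
  have : Fact p.Prime := ⟨hp⟩
  rw [isCyclic_multiplicative_iff]
  intro h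
  simpa [hp.ne_one] using coprime_card_of_isAddCyclic_prod (ZMod p) (ZMod p)

open scoped IsMulCommutative in
theorem closure_triple_cyclic (G : Type*) [Group G] (x y z : G)
    (hxy : IsCyclic ↥(Subgroup.closure ({x, y} : Set G)))
    (hxz : IsCyclic ↥(Subgroup.closure ({x, z} : Set G)))
    (hyz : IsCyclic ↥(Subgroup.closure ({y, z} : Set G))) :
    IsCyclic ↥(Subgroup.closure ({x, y, z} : Set G)) := by
  have := isMulCommutative_closure_triple hxy hxz hyz
  have : Group.FG (closure ({x, y, z} : Set G)) := Group.closure_finite_fg _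
  by_contra hA
  obtain ⟨p, hp, f, hf⟩ := CommGroup.exists_surjective_zmod_prod_of_not_isCyclic hA
  let x' : closure ({x, y, z} : Set G) := ⟨x, subset_closure (by simp)⟩
  let y' : closure ({x, y, z} : Set G) := ⟨y, subset_closure (by simp)⟩
  let z' : closure ({x, y, z} : Set G) := ⟨z, subset_closure (by simp)⟩
  have hgen : Subgroup.closure {f x', f y', f z'} = ⊤ := by
    rw [← Set.image_pair, ← Set.image_insert_eq, ← MonoidHom.map_closure,
      closure_triple_mk_eq_top, map_top_of_surjective f hf]
  have := isCyclic_closure_triple_of_pow_prime_eq_one hp pow_eq_one_multiplicative_zmod_prod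
    (isCyclic_closure_pair_map (a := x') (b := y') f hxy)
    (isCyclic_closure_pair_map (a := x') (b := z') f hxz)
    (isCyclic_closure_pair_map (a := y') (b := z') f hyz)
  rw [hgen] at this
  exact not_isCyclic_multiplicative_zmod_prod hp (topEquiv.isCyclic.mp this)
end
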